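/- arXiv:2008.01990 — 5 statements merged into one kernel-verified Lean document; each statement's English description precedes it below -/
import Mathlib

section
/- Let A satisfy the displacement equation D·A − A·W = u·vᵀ where D = diag(d) and W = diag(w) with all d_i ≠ w_j. Partition A = [[A_{11}, A_{12}],[A_{21}, A_{22}]] with A_{11} ∈ ℝ^{k×k} invertible, and let A^{(k)} = A_{22} − A_{21}A_{11}^{-1}A_{12} be the k-th Schur complement. Then A^{(k)} satisfies the displacement equation D_k·A^{(k)} − A^{(k)}·W_k = ũ·ṽᵀ for some vectors ũ, ṽ ∈ ℝ^{n−k}, where D_k = diag(d_{k+1},...,d_n) and W_k = diag(w_{k+1},...,w_n). -/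
open Matrix

lemma aux_vmv_mul {n p q : Type*} [Fintype p] (a : n → ℝ) (c : p → ℝ)
    (M : Matrix p q ℝ) :
    Matrix.vecMulVec a c * M = Matrix.vecMulVec a (Matrix.vecMul c M) := by
  ext i j
  simp [Matrix.vecMulVec_apply, Matrix.mul_apply, Matrix.vecMul, dotProduct,
    Finset.mul_sum, mul_assoc]

lemma aux_mul_vmv {n p q : Type*} [Fintype p] (M : Matrix n p ℝ) (a : p → ℝ)
    (c : q → ℝ) :
    M * Matrix.vecMulVec a c = Matrix.vecMulVec (M.mulVec a) c := by
  ext i j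
  simp [Matrix.vecMulVec_apply, Matrix.mul_apply, Matrix.mulVec, dotProduct,
    Finset.sum_mul, mul_assoc]

lemma aux_vmv_sub {n p : Type*} (a b : n → ℝ) (c e : p → ℝ) :
    Matrix.vecMulVec (a - b) (c - e)
      = Matrix.vecMulVec a c - Matrix.vecMulVec a e
        - Matrix.vecMulVec b c + Matrix.vecMulVec b e := by
  ext i j
  simp [Matrix.vecMulVec_apply]
  ring

/-- The Schur complement of the invertible leading block of a matrix with a
diagonal displacement structure `D A - A W = u vᵀ` inherits the displacement
structure with respect to the trailing diagonal blocks. -/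
theorem stmt_8 (k m : ℕ) (d w : Fin k ⊕ Fin m → ℝ) (u v : Fin k ⊕ Fin m → ℝ)
    (hdw : ∀ i j, d i ≠ w j)
    (A : Matrix (Fin k ⊕ Fin m) (Fin k ⊕ Fin m) ℝ)
    (hdisp : Matrix.diagonal d * A - A * Matrix.diagonal w = Matrix.vecMulVec u v)
    (hinv : IsUnit (A.toBlocks₁₁).det)
    (S : Matrix (Fin m) (Fin m) ℝ)
    (hS : S = A.toBlocks₂₂ - A.toBlocks₂₁ * (A.toBlocks₁₁)⁻¹ * A.toBlocks₁₂) :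
    ∃ ut vt : Fin m → ℝ,
      Matrix.diagonal (fun i : Fin m => d (Sum.inr i)) * S
          - S * Matrix.diagonal (fun j : Fin m => w (Sum.inr j))
        = Matrix.vecMulVec ut vt := by
  set B := A.toBlocks₁₁ with hB
  set C := A.toBlocks₁₂ with hC
  set C' := A.toBlocks₂₁ with hC'
  set E := A.toBlocks₂₂ with hE
  set D1 : Matrix (Fin k) (Fin k) ℝ := Matrix.diagonal (fun i => d (Sum.inl i)) with hD1
  set D2 : Matrix (Fin m) (Fin m) ℝ := Matrix.diagonal (fun i => d (Sum.inr i)) with hD2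
  set W1 : Matrix (Fin k) (Fin k) ℝ := Matrix.diagonal (fun i => w (Sum.inl i)) with hW1
  set W2 : Matrix (Fin m) (Fin m) ℝ := Matrix.diagonal (fun i => w (Sum.inr i)) with hW2
  set u1 : Fin k → ℝ := fun i => u (Sum.inl i) with hu1
  set u2 : Fin m → ℝ := fun i => u (Sum.inr i) with hu2
  set v1 : Fin k → ℝ := fun i => v (Sum.inl i) with hv1
  set v2 : Fin m → ℝ := fun i => v (Sum.inr i) with hv2
  have hBiB : B⁻¹ * B = 1 := Matrix.nonsing_inv_mul B hinv
  have hBBi : B * B⁻¹ = 1 := Matrix.mul_nonsing_inv B hinv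
  -- block equations
  have h11 : D1 * B - B * W1 = Matrix.vecMulVec u1 v1 := by
    ext i j
    have := congrFun (congrFun hdisp (Sum.inl i)) (Sum.inl j)
    simpa [hD1, hW1, hB, hu1, hv1, Matrix.toBlocks₁₁, Matrix.diagonal_mul,
      Matrix.mul_diagonal, Matrix.vecMulVec_apply] using this
  have h12 : D1 * C - C * W2 = Matrix.vecMulVec u1 v2 := by
    ext i j
    have := congrFun (congrFun hdisp (Sum.inl i)) (Sum.inr j)
    simpa [hD1, hW2, hC, hu1, hv2, Matrix.toBlocks₁₂, Matrix.diagonal_mul,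
      Matrix.mul_diagonal, Matrix.vecMulVec_apply] using this
  have h21 : D2 * C' - C' * W1 = Matrix.vecMulVec u2 v1 := by
    ext i j
    have := congrFun (congrFun hdisp (Sum.inr i)) (Sum.inl j)
    simpa [hD2, hW1, hC', hu2, hv1, Matrix.toBlocks₂₁, Matrix.diagonal_mul,
      Matrix.mul_diagonal, Matrix.vecMulVec_apply] using this
  have h22 : D2 * E - E * W2 = Matrix.vecMulVec u2 v2 := by
    ext i j
    have := congrFun (congrFun hdisp (Sum.inr i)) (Sum.inr j)
    simpa [hD2, hW2, hE, hu2, hv2, Matrix.toBlocks₂₂, Matrix.diagonal_mul,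
      Matrix.mul_diagonal, Matrix.vecMulVec_apply] using this
  refine ⟨u2 - (C' * B⁻¹).mulVec u1, v2 - Matrix.vecMul v1 (B⁻¹ * C), ?_⟩
  have h21' : D2 * C' = Matrix.vecMulVec u2 v1 + C' * W1 := by
    rw [← h21]; abel
  have h12' : D1 * C = Matrix.vecMulVec u1 v2 + C * W2 := by
    rw [← h12]; abel
  have h11' : B * W1 = D1 * B - Matrix.vecMulVec u1 v1 := by
    rw [← h11]; abel
  have e1 : C' * W1 = C' * B⁻¹ * (B * W1) := by
    calc C' * W1 = C' * (B⁻¹ * B) * W1 := by rw [hBiB, Matrix.mul_one]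
      _ = C' * B⁻¹ * (B * W1) := by
          rw [← Matrix.mul_assoc C' B⁻¹ B, Matrix.mul_assoc (C' * B⁻¹) B W1]
  have hW1Bi : C' * W1 * B⁻¹
      = C' * B⁻¹ * D1 - C' * B⁻¹ * Matrix.vecMulVec u1 v1 * B⁻¹ := by
    rw [e1, h11', Matrix.mul_sub, Matrix.sub_mul,
      ← Matrix.mul_assoc (C' * B⁻¹) D1 B,
      Matrix.mul_assoc (C' * B⁻¹ * D1) B B⁻¹, hBBi, Matrix.mul_one]
  have e2 : D2 * (C' * B⁻¹ * C) = (Matrix.vecMulVec u2 v1 + C' * W1) * (B⁻¹ * C) := by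
    rw [Matrix.mul_assoc C' B⁻¹ C, ← Matrix.mul_assoc D2 C' (B⁻¹ * C), h21']
  have e3 : (C' * W1) * (B⁻¹ * C)
      = C' * B⁻¹ * (D1 * C) - C' * B⁻¹ * Matrix.vecMulVec u1 v1 * (B⁻¹ * C) := by
    rw [← Matrix.mul_assoc (C' * W1) B⁻¹ C, hW1Bi, Matrix.sub_mul,
      Matrix.mul_assoc (C' * B⁻¹) D1 C,
      Matrix.mul_assoc (C' * B⁻¹ * Matrix.vecMulVec u1 v1) B⁻¹ C]
  have e4 : C' * B⁻¹ * Matrix.vecMulVec u1 v1 * (B⁻¹ * C)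
      = Matrix.vecMulVec ((C' * B⁻¹).mulVec u1) (Matrix.vecMul v1 (B⁻¹ * C)) := by
    rw [Matrix.mul_assoc (C' * B⁻¹) (Matrix.vecMulVec u1 v1) (B⁻¹ * C),
      aux_vmv_mul, aux_mul_vmv]
  have e5 : C' * B⁻¹ * (D1 * C)
      = Matrix.vecMulVec ((C' * B⁻¹).mulVec u1) v2 + C' * B⁻¹ * C * W2 := by
    rw [h12', Matrix.mul_add, aux_mul_vmv, Matrix.mul_assoc C' B⁻¹ (C * W2),
      ← Matrix.mul_assoc B⁻¹ C W2, ← Matrix.mul_assoc C' (B⁻¹ * C) W2,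
      ← Matrix.mul_assoc C' B⁻¹ C]
  have key : D2 * (C' * B⁻¹ * C) - (C' * B⁻¹ * C) * W2
      = Matrix.vecMulVec u2 (Matrix.vecMul v1 (B⁻¹ * C))
        + Matrix.vecMulVec ((C' * B⁻¹).mulVec u1) v2
        - Matrix.vecMulVec ((C' * B⁻¹).mulVec u1) (Matrix.vecMul v1 (B⁻¹ * C)) := by
    rw [e2, Matrix.add_mul, e3, e4, e5, aux_vmv_mul]
    abel
  rw [hS]
  have expand : D2 * (E - C' * B⁻¹ * C) - (E - C' * B⁻¹ * C) * W2
      = (D2 * E - E * W2) - (D2 * (C' * B⁻¹ * C) - (C' * B⁻¹ * C) * W2) := by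
    rw [Matrix.mul_sub, Matrix.sub_mul]; abel
  rw [expand, h22, key, aux_vmv_sub]
  abel
end

section
/- Let A be a Cauchy-like matrix A_{ij} = u_i v_j/(d_i − w_j) with all d_i, w_j pairwise distinct and A_{11} = u_1 v_1/(d_1 − w_1) ≠ 0. Then the entries of the first Schur complement A^{(1)} = A_{22} − A_{21}A_{11}^{-1}A_{12} (where A_{11} is the (1,1) entry) are given by A^{(1)}_{ij} = u^{(1)}_{1+i}·v^{(1)}_{1+j}/(d_{1+i} − w_{1+j}) for 1 ≤ i,j ≤ n−1, where u^{(1)}_{1+ℓ} = u_{1+ℓ}·(d_{1+ℓ} − d_1)/(d_{1+ℓ} − w_1) and v^{(1)}_{1+ℓ} = v_{1+ℓ}·(w_{1+ℓ} − w_1)/(w_{1+ℓ} − d_1). -/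
/-- The first Schur complement of a Cauchy-like matrix is again Cauchy-like,
with explicitly updated generators. -/
theorem stmt_9 (n : ℕ) (u v d w : Fin (n + 1) → ℝ)
    (hdw : ∀ i j, d i ≠ w j)
    (hd : Function.Injective d) (hw : Function.Injective w)
    (A : Matrix (Fin (n + 1)) (Fin (n + 1)) ℝ)
    (hA : A = Matrix.of fun i j : Fin (n + 1) => u i * v j / (d i - w j))
    (hA11 : A 0 0 ≠ 0)
    (i j : Fin (n + 1)) (hi : i ≠ 0) (hj : j ≠ 0) :
    A i j - A i 0 * (A 0 0)⁻¹ * A 0 j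
      = (u i * ((d i - d 0) / (d i - w 0)))
          * (v j * ((w j - w 0) / (w j - d 0))) / (d i - w j) := by
  subst hA
  simp only [Matrix.of_apply] at *
  have h1 : d i - w j ≠ 0 := sub_ne_zero.mpr (hdw i j)
  have h2 : d i - w 0 ≠ 0 := sub_ne_zero.mpr (hdw i 0)
  have h3 : d 0 - w j ≠ 0 := sub_ne_zero.mpr (hdw 0 j)
  have h4 : d 0 - w 0 ≠ 0 := sub_ne_zero.mpr (hdw 0 0)
  have h5 : w j - d 0 ≠ 0 := sub_ne_zero.mpr fun h => (hdw 0 j) h.symm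
  have hu : u 0 ≠ 0 := by intro h; apply hA11; simp [h]
  have hv : v 0 ≠ 0 := by intro h; apply hA11; simp [h]
  field_simp
  ring
end

section
/- Let A be an n×n Cauchy-like matrix with generators u, v and nodes d, w (all d_i ≠ w_j, d_i distinct, w_j distinct, and all leading Schur complements having nonzero (1,1) entry up to step k). Then the generators of the k-th Schur complement A^{(k)} are given in closed form by u^{(k)}_{k+ℓ} = u_{k+ℓ}·∏_{j=1}^{k} (d_{k+ℓ} − d_j)/(d_{k+ℓ} − w_j) and v^{(k)}_{k+ℓ} = v_{k+ℓ}·∏_{j=1}^{k} (w_{k+ℓ} − w_j)/(w_{k+ℓ} − d_j), for 1 ≤ ℓ ≤ n − k. -/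
/-!
Put `R(x) = ∏ₜ (x - d_t) / (x - w_t)` over the leading indices `t`. For a trailing column `j`,
the rational function `g(x) = v_j (1 - R(x) / R(w_j)) / (x - w_j)` is regular at `w_j`, has
simple poles only at the `w_t` and vanishes at infinity, so by partial fractions (Lagrange
interpolation at the nodes `w_j, w_t`) it equals `∑ₜ v_t y_t / (x - w_t)` for some vector `y`.
Since `R(d_s) = 0`, evaluating at `x = d_s` gives `A₁₁ y = A₁₂ e_j`; evaluating at the node `d_i`
of a trailing row then gives `S_ij = u_i (v_j / (d_i - w_j) - g(d_i))
= u_i v_j R(d_i) / (R(w_j) (d_i - w_j))`.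
-/

open Polynomial Finset Lagrange Matrix

variable {F : Type*} [Field F]

theorem eval_div_eval_nodal_eq_sum {ι : Type*} [DecidableEq ι] {s : Finset ι} {v : ι → F}
    (hvs : Set.InjOn v s) {f : F[X]} (hf : f.degree < #s) {x : F} (hx : ∀ i ∈ s, x ≠ v i) :
    f.eval x / (nodal s v).eval x = ∑ i ∈ s, nodalWeight s v i * f.eval (v i) / (x - v i) := by
  conv_lhs => rw [eq_interpolate hvs hf]
  rw [eval_interpolate_not_at_node _ hx, mul_div_cancel_left₀ _ (eval_nodal_not_at_node hx)]
  exact sum_congr rfl fun i _ => by ring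

theorem exists_sum_div_sub_eq_one_sub_prod_div {ι : Type*} [Fintype ι] [DecidableEq ι]
    {d w : ι → F} {W : F} (hw : Function.Injective w) (hWw : ∀ t, W ≠ w t)
    (hWd : ∀ t, W ≠ d t) :
    ∃ c : ι → F, ∀ x, (∀ t, x ≠ w t) → x ≠ W →
      ∑ t, c t / (x - w t) =
        (1 - (∏ t, (x - d t) / (x - w t)) * ∏ t, (W - w t) / (W - d t)) / (x - W) := by
  set K := ∏ t, (W - w t) / (W - d t) with hK
  set f : F[X] := nodal univ w - K • nodal univ d
  set v : Option ι → F := fun o => o.elim W w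
  have hv_none : v none = W := rfl
  have hv_some (t : ι) : v (some t) = w t := rfl
  have hv : Set.InjOn v (univ : Finset (Option ι)) := by
    rintro (_ | a) - (_ | b) - hab
    exacts [rfl, (hWw b hab).elim, (hWw a hab.symm).elim, congrArg some (hw hab)]
  have hf : f.degree < #(univ : Finset (Option ι)) := by
    have : f.degree ≤ Fintype.card ι := by
      refine (degree_sub_le _ _).trans (max_le ?_ ((degree_smul_le _ _).trans ?_)) <;>
        simp [degree_nodal]
    refine this.trans_lt ?_
    rw [card_univ, Fintype.card_option, Nat.cast_add, Nat.cast_one]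
    exact_mod_cast Nat.lt_succ_self _
  have hfW : f.eval W = 0 := by
    simp only [f, eval_sub, eval_smul, smul_eq_mul, eval_nodal, hK, prod_div_distrib]
    have : ∏ t, (W - d t) ≠ 0 := prod_ne_zero_iff.2 fun t _ => sub_ne_zero.2 (hWd t)
    field_simp
    ring
  refine ⟨fun t => nodalWeight univ v (some t) * f.eval (w t), fun x hxw hxW => ?_⟩
  have hx : ∀ o ∈ univ, x ≠ v o := by
    rintro (_ | t) -
    exacts [hxW, hxw t]
  have key := eval_div_eval_nodal_eq_sum hv hf hx
  rw [Fintype.sum_option, eval_nodal, Fintype.prod_option] at key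
  simp only [hv_none, hv_some, hfW, mul_zero, zero_div, zero_add] at key
  rw [← key]
  have : ∏ t, (x - w t) ≠ 0 := prod_ne_zero_iff.2 fun t _ => sub_ne_zero.2 (hxw t)
  have := sub_ne_zero.2 hxW
  simp only [f, eval_sub, eval_smul, smul_eq_mul, eval_nodal, prod_div_distrib]
  field_simp

def cauchyLike {m n : Type*} (u : m → F) (v : n → F) (d : m → F) (w : n → F) : Matrix m n F :=
  Matrix.of fun i j => u i * v j / (d i - w j)

section CauchyLike

variable {ι m n : Type*} [Fintype ι]

theorem cauchyLike_mulVec_apply (u : m → F) (v : ι → F) (d : m → F) (w : ι → F) (y : ι → F)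
    (i : m) : (cauchyLike u v d w *ᵥ y) i = u i * ∑ t, v t / (d i - w t) * y t := by
  simp only [mulVec, dotProduct, cauchyLike, of_apply, mul_sum]
  exact sum_congr rfl fun t _ => by ring

variable [DecidableEq ι]

theorem ne_zero_of_isUnit_det_cauchyLike {u v d w : ι → F}
    (h : IsUnit (cauchyLike u v d w).det) (t : ι) : v t ≠ 0 := by
  intro hv
  refine h.ne_zero (det_eq_zero_of_column_eq_zero t fun s => ?_)
  simp [cauchyLike, hv]

theorem cauchyLike_schur_complement_apply {u₁ v₁ d₁ w₁ : ι → F} {u₂ d₂ : m → F}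
    {v₂ w₂ : n → F} (hw₁ : Function.Injective w₁) (h₁₁ : ∀ s t, d₁ s ≠ w₁ t)
    (h₁₂ : ∀ s j, d₁ s ≠ w₂ j) (h₂₁ : ∀ i t, d₂ i ≠ w₁ t) (h₂₂ : ∀ i j, d₂ i ≠ w₂ j)
    (hw₂₁ : ∀ j t, w₂ j ≠ w₁ t) (hA : IsUnit (cauchyLike u₁ v₁ d₁ w₁).det) (i : m) (j : n) :
    (cauchyLike u₂ v₂ d₂ w₂ -
        cauchyLike u₂ v₁ d₂ w₁ * (cauchyLike u₁ v₁ d₁ w₁)⁻¹ * cauchyLike u₁ v₂ d₁ w₂) i j =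
      (u₂ i * ∏ t, (d₂ i - d₁ t) / (d₂ i - w₁ t)) *
        (v₂ j * ∏ t, (w₂ j - w₁ t) / (w₂ j - d₁ t)) / (d₂ i - w₂ j) := by
  set A := cauchyLike u₁ v₁ d₁ w₁
  set K := ∏ t, (w₂ j - w₁ t) / (w₂ j - d₁ t)
  obtain ⟨c, hc⟩ :=
    exists_sum_div_sub_eq_one_sub_prod_div hw₁ (hw₂₁ j) fun t => (h₁₂ t j).symm
  set y : ι → F := fun t => v₂ j * c t / v₁ t
  have hrow : ∀ x, (∀ t, x ≠ w₁ t) → x ≠ w₂ j → ∑ t, v₁ t / (x - w₁ t) * y t =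
      v₂ j * ((1 - (∏ t, (x - d₁ t) / (x - w₁ t)) * K) / (x - w₂ j)) := by
    intro x hxw hxW
    rw [← hc x hxw hxW, mul_sum]
    refine sum_congr rfl fun t _ => ?_
    have := ne_zero_of_isUnit_det_cauchyLike hA t
    simp only [y]
    field_simp
  have hy : A *ᵥ y = fun s => cauchyLike u₁ v₂ d₁ w₂ s j := by
    funext s
    have hR : ∏ t, (d₁ s - d₁ t) / (d₁ s - w₁ t) = 0 :=
      prod_eq_zero (mem_univ s) (by rw [sub_self, zero_div])
    rw [cauchyLike_mulVec_apply, hrow _ (h₁₁ s) (h₁₂ s j), hR]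
    simp only [cauchyLike, of_apply]
    ring
  have hsol : A⁻¹ *ᵥ (fun s => cauchyLike u₁ v₂ d₁ w₂ s j) = y := by
    have := A.invertibleOfIsUnitDet hA
    exact inv_mulVec_eq_vec hy.symm
  have hentry : (cauchyLike u₂ v₁ d₂ w₁ * A⁻¹ * cauchyLike u₁ v₂ d₁ w₂) i j =
      (cauchyLike u₂ v₁ d₂ w₁ *ᵥ y) i := by
    rw [Matrix.mul_assoc, ← hsol]
    rfl
  rw [Matrix.sub_apply, hentry, cauchyLike_mulVec_apply, hrow _ (h₂₁ i) (h₂₂ i j)]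
  simp only [cauchyLike, of_apply]
  have := sub_ne_zero.2 (h₂₂ i j)
  field_simp
  ring

end CauchyLike

/-- Closed form for the generators of the `k`-th Schur complement of a
Cauchy-like matrix: `u⁽ᵏ⁾ = u ∏ (d-d_j)/(d-w_j)`, `v⁽ᵏ⁾ = v ∏ (w-w_j)/(w-d_j)`. -/
theorem stmt_10 (k m : ℕ) (u v d w : Fin (k + m) → ℝ)
    (hdw : ∀ i j, d i ≠ w j)
    (hw : Function.Injective w)
    (A : Matrix (Fin (k + m)) (Fin (k + m)) ℝ)
    (hA : A = Matrix.of fun i j : Fin (k + m) => u i * v j / (d i - w j))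
    (hlead : ∀ (l : ℕ) (hl : l ≤ k), IsUnit
      (A.submatrix (fun i : Fin l => Fin.castLE (by omega) i)
                   (fun j : Fin l => Fin.castLE (by omega) j)).det)
    (A11 : Matrix (Fin k) (Fin k) ℝ)
    (hA11 : A11 = Matrix.of fun i j : Fin k => A (Fin.castAdd m i) (Fin.castAdd m j))
    (A12 : Matrix (Fin k) (Fin m) ℝ)
    (hA12 : A12 = Matrix.of fun (i : Fin k) (j : Fin m) => A (Fin.castAdd m i) (Fin.natAdd k j))
    (A21 : Matrix (Fin m) (Fin k) ℝ)
    (hA21 : A21 = Matrix.of fun (i : Fin m) (j : Fin k) => A (Fin.natAdd k i) (Fin.castAdd m j))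
    (A22 : Matrix (Fin m) (Fin m) ℝ)
    (hA22 : A22 = Matrix.of fun i j : Fin m => A (Fin.natAdd k i) (Fin.natAdd k j))
    (S : Matrix (Fin m) (Fin m) ℝ)
    (hS : S = A22 - A21 * A11⁻¹ * A12) :
    ∀ i j : Fin m, S i j =
      (u (Fin.natAdd k i) * ∏ t : Fin k,
          (d (Fin.natAdd k i) - d (Fin.castAdd m t)) / (d (Fin.natAdd k i) - w (Fin.castAdd m t)))
        * (v (Fin.natAdd k j) * ∏ t : Fin k,
          (w (Fin.natAdd k j) - w (Fin.castAdd m t)) / (w (Fin.natAdd k j) - d (Fin.castAdd m t)))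
        / (d (Fin.natAdd k i) - w (Fin.natAdd k j)) := by
  subst hS hA11 hA12 hA21 hA22 hA
  have hw₂₁ (j : Fin m) (t : Fin k) : w (Fin.natAdd k j) ≠ w (Fin.castAdd m t) := fun h => by
    have := congrArg Fin.val (hw h)
    simp only [Fin.val_natAdd, Fin.val_castAdd] at this
    omega
  exact cauchyLike_schur_complement_apply (hw.comp (Fin.castAdd_injective k m))
    (fun _ _ => hdw _ _) (fun _ _ => hdw _ _) (fun _ _ => hdw _ _) (fun _ _ => hdw _ _) hw₂₁
    (hlead k le_rfl)
end

section
/- Let A be a Cauchy-like matrix A_{ij} = u_i v_j/(d_i − w_j) with w_1,...,w_k distinct from w_{k+1},...,w_n and all d_i ≠ w_j, and suppose A_{11} (the leading k×k block) is invertible. Then Z^{(k)} = A_{11}^{-1}A_{12} satisfies the displacement equation W_1^{(k)}·Z^{(k)} − Z^{(k)}·W_2^{(k)} = y·ṽᵀ for some vectors y ∈ ℝ^k and ṽ ∈ ℝ^{n−k}, where W_1^{(k)} = diag(w_1,...,w_k) and W_2^{(k)} = diag(w_{k+1},...,w_n); in particular Z^{(k)} is a Cauchy-like matrix with nodes w_{1:k}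 and w_{k+1:n}. -/
open Matrix

/-- The interpolation factor `Z⁽ᵏ⁾ = A₁₁⁻¹ A₁₂` of a Cauchy-like matrix
satisfies the displacement equation `W₁ Z - Z W₂ = y ṽᵀ`; in particular it is
itself Cauchy-like with nodes `w₁,…,w_k` and `w_{k+1},…,w_n`. -/
theorem stmt_12 (k m : ℕ) (u v d w : Fin k ⊕ Fin m → ℝ)
    (hdw : ∀ i j, d i ≠ w j)
    (hww : ∀ (i : Fin k) (j : Fin m), w (Sum.inl i) ≠ w (Sum.inr j))
    (A : Matrix (Fin k ⊕ Fin m) (Fin k ⊕ Fin m) ℝ)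
    (hA : A = Matrix.of fun i j => u i * v j / (d i - w j))
    (hinv : IsUnit (A.toBlocks₁₁).det)
    (Z : Matrix (Fin k) (Fin m) ℝ) (hZ : Z = (A.toBlocks₁₁)⁻¹ * A.toBlocks₁₂) :
    ∃ (y : Fin k → ℝ) (vt : Fin m → ℝ),
      Matrix.diagonal (fun i : Fin k => w (Sum.inl i)) * Z
          - Z * Matrix.diagonal (fun j : Fin m => w (Sum.inr j))
        = Matrix.vecMulVec y vt
      ∧ ∀ (i : Fin k) (j : Fin m), Z i j = y i * vt j / (w (Sum.inl i) - w (Sum.inr j)) := by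
  set B := A.toBlocks₁₁ with hBdef
  set C := A.toBlocks₁₂ with hCdef
  have hB : ∀ (i j : Fin k), B i j = u (Sum.inl i) * v (Sum.inl j) / (d (Sum.inl i) - w (Sum.inl j)) := by
    intro i j; simp [hBdef, Matrix.toBlocks₁₁, hA]
  have hC : ∀ (i : Fin k) (j : Fin m), C i j = u (Sum.inl i) * v (Sum.inr j) / (d (Sum.inl i) - w (Sum.inr j)) := by
    intro i j; simp [hCdef, Matrix.toBlocks₁₂, hA]
  have hBC : B * Z = C := by
    rw [hZ, ← Matrix.mul_assoc, Matrix.mul_nonsing_inv _ hinv, Matrix.one_mul]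
  -- displacement equations for the blocks
  have h1 : B * Matrix.diagonal (fun j : Fin k => w (Sum.inl j))
      = Matrix.diagonal (fun i : Fin k => d (Sum.inl i)) * B
        - Matrix.vecMulVec (fun i => u (Sum.inl i)) (fun j => v (Sum.inl j)) := by
    ext i j
    simp only [Matrix.mul_diagonal, Matrix.diagonal_mul, Matrix.sub_apply,
      Matrix.vecMulVec_apply, hB]
    have h := sub_ne_zero.mpr (hdw (Sum.inl i) (Sum.inl j))
    field_simp
    ring
  have h2 : C * Matrix.diagonal (fun j : Fin m => w (Sum.inr j))
      = Matrix.diagonal (fun i : Fin k => d (Sum.inl i)) * C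
        - Matrix.vecMulVec (fun i => u (Sum.inl i)) (fun j => v (Sum.inr j)) := by
    ext i j
    simp only [Matrix.mul_diagonal, Matrix.diagonal_mul, Matrix.sub_apply,
      Matrix.vecMulVec_apply, hC]
    have h := sub_ne_zero.mpr (hdw (Sum.inl i) (Sum.inr j))
    field_simp
    ring
  set vt : Fin m → ℝ :=
    fun j => v (Sum.inr j) - ((fun i => v (Sum.inl i)) ᵥ* Z) j with hvt
  set y : Fin k → ℝ := B⁻¹ *ᵥ (fun i => u (Sum.inl i)) with hy
  have hvvZ : Matrix.vecMulVec (fun i => u (Sum.inl i)) (fun j => v (Sum.inl j)) * Z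
      = Matrix.vecMulVec (fun i => u (Sum.inl i)) ((fun i => v (Sum.inl i)) ᵥ* Z) := by
    ext i j
    simp only [Matrix.mul_apply, Matrix.vecMulVec_apply, Matrix.vecMul, dotProduct]
    rw [Finset.mul_sum]
    congr 1; ext l; ring
  have key : B * (Matrix.diagonal (fun i : Fin k => w (Sum.inl i)) * Z
      - Z * Matrix.diagonal (fun j : Fin m => w (Sum.inr j)))
      = Matrix.vecMulVec (fun i => u (Sum.inl i)) vt := by
    have e1 : B * (Matrix.diagonal (fun i : Fin k => w (Sum.inl i)) * Z)
        = Matrix.diagonal (fun i : Fin k => d (Sum.inl i)) * C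
          - Matrix.vecMulVec (fun i => u (Sum.inl i)) ((fun i => v (Sum.inl i)) ᵥ* Z) := by
      calc B * (Matrix.diagonal (fun i : Fin k => w (Sum.inl i)) * Z)
          = (B * Matrix.diagonal (fun i : Fin k => w (Sum.inl i))) * Z := by
            rw [Matrix.mul_assoc]
        _ = _ := by
            rw [h1, Matrix.sub_mul, Matrix.mul_assoc, hBC, hvvZ]
    have e2 : B * (Z * Matrix.diagonal (fun j : Fin m => w (Sum.inr j)))
        = Matrix.diagonal (fun i : Fin k => d (Sum.inl i)) * C
          - Matrix.vecMulVec (fun i => u (Sum.inl i)) (fun j => v (Sum.inr j)) := by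
      rw [← Matrix.mul_assoc, hBC, h2]
    rw [Matrix.mul_sub, e1, e2]
    ext i j
    simp only [Matrix.sub_apply, Matrix.vecMulVec_apply, hvt]
    ring
  have hBi : B⁻¹ * B = 1 := Matrix.nonsing_inv_mul _ hinv
  have hmain : Matrix.diagonal (fun i : Fin k => w (Sum.inl i)) * Z
      - Z * Matrix.diagonal (fun j : Fin m => w (Sum.inr j))
      = Matrix.vecMulVec y vt := by
    have := congrArg (fun M => B⁻¹ * M) key
    rw [← Matrix.mul_assoc, hBi, Matrix.one_mul] at this
    rw [this]
    ext i j
    simp only [Matrix.mul_apply, Matrix.vecMulVec_apply, hy, Matrix.mulVec,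
      dotProduct]
    rw [Finset.sum_mul]
    congr 1; ext l; ring
  refine ⟨y, vt, hmain, fun i j => ?_⟩
  have h := congrFun (congrFun hmain i) j
  simp only [Matrix.sub_apply, Matrix.mul_diagonal, Matrix.diagonal_mul,
    Matrix.vecMulVec_apply] at h
  have hne := sub_ne_zero.mpr (hww i j)
  rw [eq_div_iff hne]
  rw [← h]; ring
end

section
/- Let D = diag(d_1,...,d_n) with distinct d_i, ρ ≠ 0, u ∈ ℝⁿ with all u_i ≠ 0, and let λ_1,...,λ_n be the (distinct) eigenvalues of M = D + ρuuᵀ with λ_j ≠ d_i for all i,j. Define Q̂_{ij} = u_i·v_j/(d_i − λ_j) where v_j = 1/√(∑_{k=1}^{n} u_k²/(d_k − λ_j)²). Then Q̂ is an orthogonal matrix whose j-th column is a unit eigenvector of M corresponding to λ_j, i.e., M·Q̂ = Q̂·diag(λ_1,...,λ_n) and Q̂ᵀQ̂ = I. -/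
/-!
For `λ` different from every `d_i`, write `w(λ) = (D - λ)⁻¹ u`. The matrix determinant lemma gives
`det(λ - M) = ∏ (λ - d_i) · (1 + ρ uᵀ w(λ))`, so every eigenvalue `λ_j ≠ d_i` satisfies the secular
equation `1 + ρ uᵀ w(λ_j) = 0`, and the secular equation is exactly what makes
`M w(λ_j) = D w(λ_j) + ρ (uᵀ w(λ_j)) u = D w(λ_j) - u = λ_j w(λ_j)`. Since `M` is symmetric and the
`λ_j` are distinct, the `w(λ_j)` are pairwise orthogonal; they are nonzero because the secular
equation forces `uᵀ w(λ_j) ≠ 0`, and `v_j = 1/‖w(λ_j)‖` normalizes them.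
-/

open Matrix

namespace Matrix

variable {ι R K : Type*} [Fintype ι]

theorem IsSymm.dotProduct_eq_zero_of_mulVec_eq_smul [CommRing R] [NoZeroDivisors R]
    {A : Matrix ι ι R} (hA : A.IsSymm) {a b : ι → R} {x y : R} (hxy : x ≠ y)
    (ha : A *ᵥ a = x • a) (hb : A *ᵥ b = y • b) : a ⬝ᵥ b = 0 := by
  have hswap : x * (a ⬝ᵥ b) = y * (a ⬝ᵥ b) := calc
    x * (a ⬝ᵥ b) = A *ᵥ a ⬝ᵥ b := by rw [ha, smul_dotProduct, smul_eq_mul]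
    _ = a ⬝ᵥ A *ᵥ b := by rw [dotProduct_mulVec, ← mulVec_transpose, hA.eq]
    _ = y * (a ⬝ᵥ b) := by rw [hb, dotProduct_smul, smul_eq_mul]
  exact mul_right_cancel₀ (sub_ne_zero.mpr hxy) (by linear_combination hswap)

theorem mul_eq_mul_diagonal_of_mulVec_eq_smul [CommRing R] [DecidableEq ι]
    {A B : Matrix ι ι R} {μ : ι → R} (h : ∀ j, A *ᵥ Bᵀ j = μ j • Bᵀ j) :
    A * B = B * diagonal μ := by
  ext i j
  rw [mul_diagonal, mul_comm]
  exact congrFun (h j) i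

theorem transpose_mul_self_eq_one [CommRing R] [DecidableEq ι] {B : Matrix ι ι R}
    (hnorm : ∀ j, Bᵀ j ⬝ᵥ Bᵀ j = 1) (horth : ∀ j l, j ≠ l → Bᵀ j ⬝ᵥ Bᵀ l = 0) :
    Bᵀ * B = 1 := by
  ext j l
  rw [mul_apply', one_apply]
  split_ifs with hjl
  · exact hjl ▸ hnorm j
  · exact horth j l hjl

theorem one_div_sqrt_smul_dotProduct_self {a : ι → ℝ} (ha : a ≠ 0) :
    (1 / √(a ⬝ᵥ a)) • a ⬝ᵥ (1 / √(a ⬝ᵥ a)) • a = 1 := by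
  have hpos : 0 < a ⬝ᵥ a := lt_of_le_of_ne (Finset.sum_nonneg fun i _ => mul_self_nonneg _)
    (Ne.symm (dotProduct_self_eq_zero.not.mpr ha))
  rw [smul_dotProduct, dotProduct_smul, smul_smul, ← sq, div_pow, one_pow,
    Real.sq_sqrt hpos.le, smul_eq_mul, one_div_mul_cancel hpos.ne']

variable [DecidableEq ι]

theorem det_diagonal_add_vecMulVec [Field K] {e : ι → K} (he : ∀ i, e i ≠ 0) (u w : ι → K) :
    (diagonal e + vecMulVec u w).det = (∏ i, e i) * (1 + w ⬝ᵥ (u / e)) := by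
  have hfactor : diagonal e + vecMulVec u w = diagonal e * (1 + vecMulVec (u / e) w) := by
    rw [mul_add, mul_one]
    congr 1
    ext i j
    rw [diagonal_mul, vecMulVec_apply, vecMulVec_apply, Pi.div_apply, ← mul_assoc,
      mul_div_cancel₀ _ (he i)]
  rw [hfactor, det_mul, det_diagonal, vecMulVec_eq Unit,
    det_one_add_replicateCol_mul_replicateRow]

theorem one_add_mul_dotProduct_eq_zero_of_isRoot_charpoly [Field K] {d : ι → K} {x : K}
    (hx : ∀ i, x ≠ d i) (ρ : K) (u : ι → K)
    (hroot : (diagonal d + ρ • vecMulVec u u).charpoly.IsRoot x) :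
    1 + ρ * (u ⬝ᵥ fun i => u i / (d i - x)) = 0 := by
  have hsub : ∀ i, x - d i ≠ 0 := fun i => sub_ne_zero.mpr (hx i)
  have hdecomp : scalar ι x - (diagonal d + ρ • vecMulVec u u)
      = diagonal (fun i => x - d i) + vecMulVec (-ρ • u) u := by
    rw [scalar_apply, smul_vecMulVec, ← sub_sub, ← diagonal_sub, neg_smul, sub_eq_add_neg]
  rw [Polynomial.IsRoot, eval_charpoly, hdecomp, det_diagonal_add_vecMulVec hsub, mul_eq_zero,
    or_iff_right (Finset.prod_ne_zero_iff.mpr fun i _ => hsub i)] at hroot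
  rw [← hroot]
  simp only [dotProduct, Finset.mul_sum, Pi.div_apply, Pi.smul_apply, smul_eq_mul]
  congr 1
  refine Finset.sum_congr rfl fun i _ => ?_
  rw [← neg_sub x (d i), div_neg]
  ring

theorem diagonal_add_smul_vecMulVec_mulVec [Field K] {d : ι → K} {x : K}
    (hx : ∀ i, x ≠ d i) (ρ : K) (u : ι → K)
    (hsec : 1 + ρ * (u ⬝ᵥ fun i => u i / (d i - x)) = 0) :
    (diagonal d + ρ • vecMulVec u u) *ᵥ (fun i => u i / (d i - x))
      = x • fun i => u i / (d i - x) := by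
  ext i
  have hsub : d i - x ≠ 0 := sub_ne_zero.mpr (hx i).symm
  have hres : d i * (u i / (d i - x)) = u i + x * (u i / (d i - x)) := by field_simp; ring
  simp only [add_mulVec, smul_mulVec, vecMulVec_mulVec, mulVec_diagonal, Pi.add_apply,
    Pi.smul_apply, smul_eq_mul, MulOpposite.smul_eq_mul_unop, MulOpposite.unop_op]
  linear_combination hres + u i * hsec

end Matrix

theorem stmt_13_general (n : ℕ) (d u lam : Fin n → ℝ) (ρ : ℝ)
    (hlam : Function.Injective lam)
    (hld : ∀ i j, lam j ≠ d i)
    (M : Matrix (Fin n) (Fin n) ℝ)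
    (hM : M = Matrix.diagonal d + ρ • Matrix.vecMulVec u u)
    (hchar : M.charpoly = ∏ i, (Polynomial.X - Polynomial.C (lam i)))
    (v : Fin n → ℝ)
    (hv : v = fun j => 1 / Real.sqrt (∑ k, u k ^ 2 / (d k - lam j) ^ 2))
    (Q : Matrix (Fin n) (Fin n) ℝ)
    (hQ : Q = Matrix.of fun i j : Fin n => u i * v j / (d i - lam j)) :
    M * Q = Q * Matrix.diagonal lam ∧ Qᵀ * Q = 1 := by
  set w : Fin n → Fin n → ℝ := fun j i => u i / (d i - lam j)
  have hS : ∀ j, ∑ k, u k ^ 2 / (d k - lam j) ^ 2 = w j ⬝ᵥ w j := fun j => by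
    simp only [dotProduct, w, sq, div_mul_div_comm]
  have hcol : ∀ j, Qᵀ j = (1 / √(w j ⬝ᵥ w j)) • w j := fun j => by
    ext i
    simp only [hQ, hv, hS, transpose_apply, of_apply, Pi.smul_apply, smul_eq_mul, w]
    ring
  have hsec : ∀ j, 1 + ρ * (u ⬝ᵥ w j) = 0 := fun j =>
    one_add_mul_dotProduct_eq_zero_of_isRoot_charpoly (fun i => hld i j) ρ u <| by
      rw [← hM, hchar, Polynomial.isRoot_prod]
      exact ⟨j, Finset.mem_univ j, Polynomial.root_X_sub_C.mpr rfl⟩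
  have heig : ∀ j, M *ᵥ w j = lam j • w j := fun j =>
    hM ▸ diagonal_add_smul_vecMulVec_mulVec (fun i => hld i j) ρ u (hsec j)
  have hsymm : M.IsSymm :=
    hM ▸ (isSymm_diagonal d).add ((IsSymm.ext fun i j => mul_comm _ _).smul ρ)
  have hw : ∀ j, w j ≠ 0 := fun j h => by simpa [h] using hsec j
  refine ⟨mul_eq_mul_diagonal_of_mulVec_eq_smul fun j => ?_,
    transpose_mul_self_eq_one (fun j => ?_) fun j l hjl => ?_⟩
  · rw [hcol, mulVec_smul, heig, smul_comm]
  · rw [hcol]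
    exact one_div_sqrt_smul_dotProduct_self (hw j)
  · rw [hcol, hcol, smul_dotProduct, dotProduct_smul,
      hsymm.dotProduct_eq_zero_of_mulVec_eq_smul (hlam.ne hjl) (heig j) (heig l), smul_zero,
      smul_zero]

/-- The normalized Cauchy-like matrix `Q̂ i j = u i v j / (d i - λ j)` with
`v j = 1/√(∑ u_k²/(d_k - λ_j)²)` is the orthogonal eigenvector matrix of
`M = D + ρ u uᵀ`. -/
theorem stmt_13 (n : ℕ) (d u lam : Fin n → ℝ) (ρ : ℝ)
    (hd : Function.Injective d) (hρ : ρ ≠ 0) (hu : ∀ i, u i ≠ 0)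
    (hlam : Function.Injective lam)
    (hld : ∀ i j, lam j ≠ d i)
    (M : Matrix (Fin n) (Fin n) ℝ)
    (hM : M = Matrix.diagonal d + ρ • Matrix.vecMulVec u u)
    (hchar : M.charpoly = ∏ i, (Polynomial.X - Polynomial.C (lam i)))
    (v : Fin n → ℝ)
    (hv : v = fun j => 1 / Real.sqrt (∑ k, u k ^ 2 / (d k - lam j) ^ 2))
    (Q : Matrix (Fin n) (Fin n) ℝ)
    (hQ : Q = Matrix.of fun i j : Fin n => u i * v j / (d i - lam j)) :
    M * Q = Q * Matrix.diagonal lam ∧ Qᵀ * Q = 1 :=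
  stmt_13_general n d u lam ρ hlam hld M hM hchar v hv Q hQ
end
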